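/- The number of right identities of the triangle Δ^{(n)}{a,b,c} equals (b−a)(c−b): the right identities are exactly the maps a_k b_{n−k−j} c_j with a+1 ≤ k ≤ b and n−c ≤ j ≤ n−b−1. -/

import Mathlib

/-!
Testing against constant maps shows that `ε` is a right identity of the triangle exactly when
it fixes `a`, `b` and `c`. A monotone map into `{a, b, c}` is some `a_k b_ℓ c_j`, and it fixes
`a`, `b`, `c` iff `a < k ≤ b < k + ℓ ≤ c`, i.e. iff `a + 1 ≤ k ≤ b` and `n - c ≤ j ≤ n - b - 1`.
Distinct parameters give distinct maps, which yields the count `(b - a)(c - b)`.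
-/

/-- The element `a_k b_ℓ c_{n-k-ℓ}` of the triangle `Δ^{(n)}{a,b,c}`. -/
def triMap (n : ℕ) (a b c : Fin n) (k ℓ : ℕ) : Fin n → Fin n :=
  fun i => if (i : ℕ) < k then a else if (i : ℕ) < k + ℓ then b else c

lemma Fin.exists_mem_iff_lt_of_isLowerSet {n : ℕ} {s : Set (Fin n)} (hs : IsLowerSet s) :
    ∃ k ≤ n, ∀ i : Fin n, i ∈ s ↔ (i : ℕ) < k := by
  rcases hs.eq_univ_or_Iio with rfl | ⟨m, rfl⟩
  · exact ⟨n, le_rfl, fun i => by simp [i.isLt]⟩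
  · exact ⟨m, m.isLt.le, fun i => Fin.lt_def⟩

lemma Nat.eq_of_forall_lt_iff_lt {n k k' : ℕ} (hk : k ≤ n) (hk' : k' ≤ n)
    (h : ∀ i < n, i < k ↔ i < k') : k = k' := by
  by_contra hne
  have := h (min k k') (by omega)
  omega

lemma forall_comp_eq_self_iff_eqOn {ι α : Type*} [Preorder ι] [Nonempty ι] [Preorder α]
    (ε : α → α) (S : Set α) :
    (∀ β : ι → α, Monotone β → Set.range β ⊆ S → ε ∘ β = β) ↔ Set.EqOn ε id S := by
  refine ⟨fun h x hx => ?_, fun h β _ hβ => funext fun i => h (hβ ⟨i, rfl⟩)⟩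
  inhabit ι
  exact congrFun (h (fun _ => x) monotone_const (Set.range_subset_iff.2 fun _ => hx)) default

namespace triMap

variable {n : ℕ} {a b c : Fin n} {k ℓ : ℕ}

lemma monotone (hab : a ≤ b) (hbc : b ≤ c) : Monotone (triMap n a b c k ℓ) := by
  intro i i' hii'
  have : (i : ℕ) ≤ i' := hii'
  simp only [triMap]
  split_ifs <;> first | rfl | exact hab | exact hbc | exact hab.trans hbc | omega

lemma range_subset : Set.range (triMap n a b c k ℓ) ⊆ {a, b, c} := by
  rintro _ ⟨i, rfl⟩
  simp only [triMap]
  split_ifs <;> simp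

lemma apply_eq_left_iff (hab : a ≠ b) (hac : a ≠ c) (i : Fin n) :
    triMap n a b c k ℓ i = a ↔ (i : ℕ) < k := by
  simp only [triMap]
  split_ifs <;> simp_all [Ne.symm hab, Ne.symm hac]

lemma apply_ne_right_iff (hac : a ≠ c) (hbc : b ≠ c) (i : Fin n) :
    triMap n a b c k ℓ i ≠ c ↔ (i : ℕ) < k + ℓ := by
  simp only [triMap]
  split_ifs <;> simp_all; omega

lemma eqOn_id_iff (hab : a < b) (hbc : b < c) :
    Set.EqOn (triMap n a b c k ℓ) id {a, b, c} ↔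
      (a : ℕ) < k ∧ k ≤ (b : ℕ) ∧ (b : ℕ) < k + ℓ ∧ k + ℓ ≤ (c : ℕ) := by
  have hab' : (a : ℕ) < b := hab
  have hbc' : (b : ℕ) < c := hbc
  simp only [Set.EqOn, Set.mem_insert_iff, Set.mem_singleton_iff, forall_eq_or_imp,
    forall_eq, id, triMap]
  split_ifs <;> simp_all [hab.ne, hab.ne', hbc.ne, hbc.ne', (hab.trans hbc).ne,
    (hab.trans hbc).ne']
  omega

lemma inj_of_add_le (hab : a ≠ b) (hac : a ≠ c) (hbc : b ≠ c) {k' ℓ' : ℕ} (h : k + ℓ ≤ n)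
    (h' : k' + ℓ' ≤ n) (heq : triMap n a b c k ℓ = triMap n a b c k' ℓ') :
    k = k' ∧ ℓ = ℓ' := by
  have hk : k = k' := Nat.eq_of_forall_lt_iff_lt (n := n) (by omega) (by omega) fun i hi => by
    rw [← apply_eq_left_iff hab hac ⟨i, hi⟩, ← apply_eq_left_iff hab hac ⟨i, hi⟩, heq]
  have hkℓ : k + ℓ = k' + ℓ' := Nat.eq_of_forall_lt_iff_lt h h' fun i hi => by
    rw [← apply_ne_right_iff hac hbc ⟨i, hi⟩, ← apply_ne_right_iff hac hbc ⟨i, hi⟩, heq]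
  omega

end triMap

lemma Monotone.exists_eq_triMap {n : ℕ} {a b c : Fin n} (hab : a < b) (hbc : b < c)
    {ε : Fin n → Fin n} (hε : Monotone ε) (hrange : Set.range ε ⊆ {a, b, c}) :
    ∃ k ℓ, k + ℓ ≤ n ∧ ε = triMap n a b c k ℓ := by
  have hval : ∀ i, ε i = a ∨ ε i = b ∨ ε i = c := fun i => hrange ⟨i, rfl⟩
  have hge : ∀ i, a ≤ ε i := fun i => by
    rcases hval i with h | h | h <;> simp [h, hab.le, (hab.trans hbc).le]
  have hle : ∀ i, ε i ≤ c := fun i => by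
    rcases hval i with h | h | h <;> simp [h, hbc.le, (hab.trans hbc).le]
  have hlowA : IsLowerSet {i | ε i = a} := fun j i hij hj =>
    le_antisymm ((hε hij).trans hj.le) (hge i)
  have hlowC : IsLowerSet {i | ε i ≠ c} := fun j i hij hj hi =>
    hj (le_antisymm (hle j) (hi ▸ hε hij))
  obtain ⟨k, hkn, hk⟩ := Fin.exists_mem_iff_lt_of_isLowerSet hlowA
  obtain ⟨m, hmn, hm⟩ := Fin.exists_mem_iff_lt_of_isLowerSet hlowC
  have hac : a ≠ c := (hab.trans hbc).ne
  have hkm : k ≤ m := by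
    by_contra! hmk
    have hεa : ε ⟨m, by omega⟩ = a := (hk _).2 hmk
    exact lt_irrefl m ((hm _).1 (hεa ▸ hac))
  refine ⟨k, m - k, by omega, funext fun i => ?_⟩
  simp only [triMap, Nat.add_sub_cancel' hkm]
  split_ifs with hik him
  · exact (hk i).2 hik
  · have hεa : ε i ≠ a := mt (hk i).1 hik
    have hεc : ε i ≠ c := (hm i).2 him
    exact ((hval i).resolve_left hεa).resolve_right hεc
  · exact not_not.1 (mt (hm i).1 him)

lemma rightIdentity_iff_exists_triMap {n : ℕ} {a b c : Fin n} (hab : a < b) (hbc : b < c)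
    (ε : Fin n → Fin n) :
    (Monotone ε ∧ Set.range ε ⊆ {a, b, c} ∧
        ∀ β : Fin n → Fin n, Monotone β → Set.range β ⊆ {a, b, c} → ε ∘ β = β) ↔
      ∃ k j : ℕ, (a : ℕ) + 1 ≤ k ∧ k ≤ (b : ℕ) ∧
        n - (c : ℕ) ≤ j ∧ j ≤ n - (b : ℕ) - 1 ∧ ε = triMap n a b c k (n - k - j) := by
  have : Nonempty (Fin n) := ⟨a⟩
  have hcn : (c : ℕ) < n := c.isLt
  rw [forall_comp_eq_self_iff_eqOn]
  constructor
  · rintro ⟨hε, hrange, hfix⟩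
    obtain ⟨k, ℓ, hkℓ, rfl⟩ := hε.exists_eq_triMap hab hbc hrange
    obtain ⟨hak, hkb, hbℓ, hℓc⟩ := (triMap.eqOn_id_iff hab hbc).1 hfix
    exact ⟨k, n - k - ℓ, hak, hkb, by omega, by omega, by congr 1; omega⟩
  · rintro ⟨k, j, hak, hkb, hcj, hjb, rfl⟩
    exact ⟨triMap.monotone hab.le hbc.le, triMap.range_subset,
      (triMap.eqOn_id_iff hab hbc).2 ⟨hak, hkb, by omega, by omega⟩⟩

lemma setOf_triMap_eq_image {n : ℕ} (a b c : Fin n) :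
    {ε : Fin n → Fin n | ∃ k j : ℕ, (a : ℕ) + 1 ≤ k ∧ k ≤ (b : ℕ) ∧
        n - (c : ℕ) ≤ j ∧ j ≤ n - (b : ℕ) - 1 ∧ ε = triMap n a b c k (n - k - j)} =
      (fun p : ℕ × ℕ => triMap n a b c p.1 (n - p.1 - p.2)) ''
        (Set.Icc ((a : ℕ) + 1) b ×ˢ Set.Icc (n - (c : ℕ)) (n - (b : ℕ) - 1)) := by
  ext ε
  simp only [Set.mem_ofPred_eq, Set.mem_image, Set.mem_prod, Set.mem_Icc, Prod.exists]
  constructor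
  · rintro ⟨k, j, h₁, h₂, h₃, h₄, rfl⟩
    exact ⟨k, j, ⟨⟨h₁, h₂⟩, h₃, h₄⟩, rfl⟩
  · rintro ⟨k, j, ⟨⟨h₁, h₂⟩, h₃, h₄⟩, rfl⟩
    exact ⟨k, j, h₁, h₂, h₃, h₄, rfl⟩

lemma card_setOf_triMap {n : ℕ} {a b c : Fin n} (hab : a < b) (hbc : b < c) :
    Nat.card {ε : Fin n → Fin n | ∃ k j : ℕ, (a : ℕ) + 1 ≤ k ∧ k ≤ (b : ℕ) ∧
        n - (c : ℕ) ≤ j ∧ j ≤ n - (b : ℕ) - 1 ∧ ε = triMap n a b c k (n - k - j)} =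
      ((b : ℕ) - (a : ℕ)) * ((c : ℕ) - (b : ℕ)) := by
  have hcn : (c : ℕ) < n := c.isLt
  have hinj : Set.InjOn (fun p : ℕ × ℕ => triMap n a b c p.1 (n - p.1 - p.2))
      (Set.Icc ((a : ℕ) + 1) b ×ˢ Set.Icc (n - (c : ℕ)) (n - (b : ℕ) - 1)) := by
    rintro ⟨k, j⟩ ⟨⟨-, hkb : k ≤ b⟩, -, hjb : j ≤ n - b - 1⟩
      ⟨k', j'⟩ ⟨⟨-, hkb' : k' ≤ b⟩, -, hjb' : j' ≤ n - b - 1⟩ heq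
    obtain ⟨rfl, hℓ⟩ := triMap.inj_of_add_le hab.ne (hab.trans hbc).ne hbc.ne
      (by omega) (by omega) heq
    exact Prod.ext rfl (by omega)
  rw [setOf_triMap_eq_image, Nat.card_image_of_injOn hinj, Nat.card_coe_set_eq,
    Set.ncard_prod, Set.ncard_Icc_nat, Set.ncard_Icc_nat]
  congr 1 <;> omega

theorem stmt18_general (n : ℕ) (a b c : Fin n) (hab : a < b) (hbc : b < c) :
    ({ε : Fin n → Fin n | Monotone ε ∧ Set.range ε ⊆ {a, b, c} ∧
        ∀ β : Fin n → Fin n, Monotone β → Set.range β ⊆ {a, b, c} → ε ∘ β = β}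
      = {ε : Fin n → Fin n | ∃ k j : ℕ, (a : ℕ) + 1 ≤ k ∧ k ≤ (b : ℕ) ∧
          n - (c : ℕ) ≤ j ∧ j ≤ n - (b : ℕ) - 1 ∧ ε = triMap n a b c k (n - k - j)}) ∧
    Nat.card {ε : Fin n → Fin n // Monotone ε ∧ Set.range ε ⊆ {a, b, c} ∧
        ∀ β : Fin n → Fin n, Monotone β → Set.range β ⊆ {a, b, c} → ε ∘ β = β}
      = ((b : ℕ) - (a : ℕ)) * ((c : ℕ) - (b : ℕ)) := by
  have hset := Set.ext (rightIdentity_iff_exists_triMap hab hbc)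
  exact ⟨hset, (Nat.card_congr (Equiv.setCongr hset)).trans (card_setOf_triMap hab hbc)⟩

/-- The right identities of `Δ^{(n)}{a,b,c}` are exactly the maps
`a_k b_{n-k-j} c_j` with `a+1 ≤ k ≤ b` and `n-c ≤ j ≤ n-b-1`, and there are exactly
`(b-a)(c-b)` of them. -/
theorem stmt18 (n : ℕ) (hn : 3 ≤ n) (a b c : Fin n) (hab : a < b) (hbc : b < c) :
    ({ε : Fin n → Fin n | Monotone ε ∧ Set.range ε ⊆ {a, b, c} ∧
        ∀ β : Fin n → Fin n, Monotone β → Set.range β ⊆ {a, b, c} → ε ∘ β = β}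
      = {ε : Fin n → Fin n | ∃ k j : ℕ, (a : ℕ) + 1 ≤ k ∧ k ≤ (b : ℕ) ∧
          n - (c : ℕ) ≤ j ∧ j ≤ n - (b : ℕ) - 1 ∧ ε = triMap n a b c k (n - k - j)}) ∧
    Nat.card {ε : Fin n → Fin n // Monotone ε ∧ Set.range ε ⊆ {a, b, c} ∧
        ∀ β : Fin n → Fin n, Monotone β → Set.range β ⊆ {a, b, c} → ε ∘ β = β}
      = ((b : ℕ) - (a : ℕ)) * ((c : ℕ) - (b : ℕ)) :=
  stmt18_general n a b c hab hbc
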